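/- arXiv:2412.13945 — 3 statements merged into one kernel-verified Lean document; each statement's English description precedes it below -/
import Mathlib

section
/- Every properly edge-colored graph on n vertices with at least n·log₂(n+3) edges contains, for some integer k ≥ 3, a cycle of length k whose edges receive more than k/2 distinct colors. -/
set_option linter.unusedSectionVars false

open SimpleGraph Walk Finset List

variable {V : Type*} [DecidableEq V] {G : SimpleGraph V} {c : Sym2 V → ℕ}

def csw (c : Sym2 V → ℕ) {u v : V} (P : G.Walk u v) : Finset ℕ := (P.edges.map c).toFinset

lemma csw_card {u v : V} {P : G.Walk u v} (h : (P.edges.map c).Nodup) :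
    (csw c P).card = P.length := by
  rw [csw, List.toFinset_card_of_nodup h, List.length_map, Walk.length_edges]

lemma card_union_lt {A B : Finset ℕ} (h : A ≠ B) :
    A.card + B.card < 2 * (A ∪ B).card := by
  have hsub : A ∩ B ⊆ A ∪ B := (Finset.inter_subset_left).trans Finset.subset_union_left
  have hne : A ∩ B ≠ A ∪ B := by
    intro he
    apply h
    have hA : A ⊆ B := fun x hx =>
      (Finset.mem_inter.1 (he ▸ (Finset.subset_union_left hx))).2
    have hB : B ⊆ A := fun x hx =>
      (Finset.mem_inter.1 (he ▸ (Finset.subset_union_right hx))).1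
    exact Finset.Subset.antisymm hA hB
  have hlt : (A ∩ B).card < (A ∪ B).card :=
    Finset.card_lt_card (ssubset_of_subset_of_ne hsub hne)
  have := Finset.card_union_add_card_inter A B
  omega

lemma edge_end_len_one {v u : V} {P : G.Walk v u} (hP : P.IsPath)
    (he : s(v, u) ∈ P.edges) : P.length = 1 := by
  cases P with
  | nil => simp at he
  | @cons _ x _ hadj P' =>
    rw [Walk.edges_cons, List.mem_cons] at he
    rcases he with he | he
    · have hx : x = u := by
        rw [Sym2.eq_iff] at he
        rcases he with ⟨-, h⟩ | ⟨h1, h2⟩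
        · exact h.symm
        · exfalso; exact G.loopless.irrefl v (h1 ▸ hadj)
      subst hx
      have hP' : P' = Walk.nil := Walk.isPath_iff_eq_nil.1 ((Walk.cons_isPath_iff hadj P').1 hP).1
      simp [hP']
    · exfalso
      have : v ∈ P'.support := Walk.fst_mem_support_of_mem_edges P' he
      exact ((Walk.cons_isPath_iff hadj P').1 hP).2 this

section
variable (hnc : ∀ (v : V) (w : G.Walk v v), w.IsCycle → 2 * ((w.edges.map c).toFinset.card) ≤ w.length)
include hnc

lemma no_rainbow_cycle {v : V} (w : G.Walk v v) (hc : w.IsCycle) (hr : (w.edges.map c).Nodup) :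
    False := by
  have h1 := hnc v w hc
  rw [List.toFinset_card_of_nodup hr, List.length_map, Walk.length_edges] at h1
  have h0 : w.length = 0 := by omega
  exact hc.ne_nil ((Walk.nil_iff_length_eq.2 h0).eq_nil)

lemma two_paths_contra {v u : V} (hvu : v ≠ u) {P Q : G.Walk v u}
    (hP : P.IsPath) (hQ : Q.IsPath)
    (hrP : (P.edges.map c).Nodup) (hrQ : (Q.edges.map c).Nodup)
    (hdisj : ∀ x, x ∈ P.support → x ∈ Q.support → x = v ∨ x = u)
    (hne : csw c P ≠ csw c Q) : False := by
  -- shared edges are impossible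
  have hedisj : ∀ e, e ∈ P.edges → e ∈ Q.edges → False := by
    intro e heP heQ
    induction e with
    | _ a b =>
      have hab : G.Adj a b := P.adj_of_mem_edges heP
      have haP : a ∈ P.support := Walk.fst_mem_support_of_mem_edges P heP
      have hbP : b ∈ P.support := Walk.snd_mem_support_of_mem_edges P heP
      have haQ : a ∈ Q.support := Walk.fst_mem_support_of_mem_edges Q heQ
      have hbQ : b ∈ Q.support := Walk.snd_mem_support_of_mem_edges Q heQ
      have hevu : s(a, b) = s(v, u) := by
        rcases hdisj a haP haQ with ha | ha <;> rcases hdisj b hbP hbQ with hb | hb <;>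
          subst ha <;> subst hb
        · exact absurd rfl hab.ne
        · rfl
        · exact Sym2.eq_swap
        · exact absurd rfl hab.ne
      rw [hevu] at heP heQ
      have hP1 : P.length = 1 := edge_end_len_one hP heP
      have hQ1 : Q.length = 1 := edge_end_len_one hQ heQ
      apply hne
      have hPe : P.edges = [s(v, u)] := by
        obtain ⟨e', he'⟩ := List.length_eq_one_iff.1 (by rw [Walk.length_edges]; exact hP1)
        rw [he'] at heP
        have : s(v, u) = e' := by simpa using heP
        rw [he', ← this]
      have hQe : Q.edges = [s(v, u)] := by
        obtain ⟨e', he'⟩ := List.length_eq_one_iff.1 (by rw [Walk.length_edges]; exact hQ1)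
        rw [he'] at heQ
        have : s(v, u) = e' := by simpa using heQ
        rw [he', ← this]
      rw [csw, csw, hPe, hQe]
  -- build the cycle
  set C : G.Walk v v := P.append Q.reverse with hC
  have hCtrail : C.IsTrail := by
    constructor
    rw [hC, Walk.edges_append, Walk.edges_reverse]
    rw [List.nodup_append]
    refine ⟨hP.isTrail.edges_nodup, List.nodup_reverse.2 hQ.isTrail.edges_nodup, ?_⟩
    intro e heP e' heQ hee; subst hee
    exact hedisj e heP (List.mem_reverse.1 heQ)
  have hCcycle : C.IsCycle := by
    refine ⟨⟨hCtrail, ?_⟩, ?_⟩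
    · intro h
      have hlen : P.length + Q.length = 0 := by
        have := congrArg Walk.length h
        simpa [hC, Walk.length_append, Walk.length_reverse] using this
      exact hvu (Walk.eq_of_length_eq_zero (p := P) (by omega))
    · rw [hC, Walk.tail_support_append, List.nodup_append]
      refine ⟨hP.support_nodup.tail, hQ.reverse.support_nodup.tail, ?_⟩
      intro x hxP x' hxQ hxx; subst hxx
      have hxP' : x ∈ P.support := List.mem_of_mem_tail hxP
      have hxQ' : x ∈ Q.support := by
        have := List.mem_of_mem_tail hxQ
        rw [Walk.support_reverse, List.mem_reverse] at this
        exact this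
      rcases hdisj x hxP' hxQ' with hx | hx
      · subst hx
        have := hP.support_nodup
        rw [P.support_eq_cons] at this
        exact (List.nodup_cons.1 this).1 hxP
      · subst hx
        have := hQ.reverse.support_nodup
        rw [Q.reverse.support_eq_cons] at this
        exact (List.nodup_cons.1 this).1 hxQ
  have hkey := hnc v C hCcycle
  have hCedges : C.edges.map c = P.edges.map c ++ (Q.edges.map c).reverse := by
    rw [hC, Walk.edges_append, Walk.edges_reverse, List.map_append, List.map_reverse]
  have hCcs : (C.edges.map c).toFinset = csw c P ∪ csw c Q := by
    rw [hCedges, List.toFinset_append, List.toFinset_reverse]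
    rfl
  have hClen : C.length = P.length + Q.length := by
    rw [hC, Walk.length_append, Walk.length_reverse]
  rw [hCcs, hClen] at hkey
  have hlt := card_union_lt hne
  rw [csw_card hrP, csw_card hrQ] at hlt
  omega

end

section
variable (hnc : ∀ (v : V) (w : G.Walk v v), w.IsCycle → 2 * ((w.edges.map c).toFinset.card) ≤ w.length)
include hnc

lemma key_same_cs : ∀ (m : ℕ) (v u : V) (P Q : G.Walk v u),
    P.length + Q.length ≤ m → P.IsPath → Q.IsPath →
    (P.edges.map c).Nodup → (Q.edges.map c).Nodup → csw c P = csw c Q := by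
  intro m
  induction m with
  | zero =>
    intro v u P Q hlen hP hQ hrP hrQ
    have hPe : P.edges = [] := List.length_eq_zero_iff.1 (by rw [Walk.length_edges]; omega)
    have hQe : Q.edges = [] := List.length_eq_zero_iff.1 (by rw [Walk.length_edges]; omega)
    rw [csw, csw, hPe, hQe]
  | succ m ih =>
    intro v u P Q hlen hP hQ hrP hrQ
    by_cases hvu : v = u
    · subst hvu
      rw [Walk.isPath_iff_eq_nil.1 hP, Walk.isPath_iff_eq_nil.1 hQ]
    by_contra hne
    by_cases hX : ∃ w, w ∈ P.support ∧ w ∈ Q.support ∧ w ≠ v ∧ w ≠ u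
    · obtain ⟨w, hwP, hwQ, hwv, hwu⟩ := hX
      set P1 := P.takeUntil w hwP with hP1def
      set P2 := P.dropUntil w hwP with hP2def
      set Q1 := Q.takeUntil w hwQ with hQ1def
      set Q2 := Q.dropUntil w hwQ with hQ2def
      have hPspec : P1.append P2 = P := P.take_spec hwP
      have hQspec : Q1.append Q2 = Q := Q.take_spec hwQ
      have hPlen : P1.length + P2.length = P.length := by
        rw [← Walk.length_append, hPspec]
      have hQlen : Q1.length + Q2.length = Q.length := by
        rw [← Walk.length_append, hQspec]
      have hP1pos : P1.length ≠ 0 := fun h0 => hwv (Walk.eq_of_length_eq_zero (p := P1) h0).symm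
      have hP2pos : P2.length ≠ 0 := fun h0 => hwu (Walk.eq_of_length_eq_zero (p := P2) h0)
      have hQ1pos : Q1.length ≠ 0 := fun h0 => hwv (Walk.eq_of_length_eq_zero (p := Q1) h0).symm
      have hQ2pos : Q2.length ≠ 0 := fun h0 => hwu (Walk.eq_of_length_eq_zero (p := Q2) h0)
      have hPedges : P.edges.map c = P1.edges.map c ++ P2.edges.map c := by
        conv_lhs => rw [← hPspec]
        rw [Walk.edges_append, List.map_append]
      have hQedges : Q.edges.map c = Q1.edges.map c ++ Q2.edges.map c := by
        conv_lhs => rw [← hQspec]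
        rw [Walk.edges_append, List.map_append]
      rw [hPedges, List.nodup_append] at hrP
      rw [hQedges, List.nodup_append] at hrQ
      have hPcs : csw c P = csw c P1 ∪ csw c P2 := by
        rw [csw, hPedges, List.toFinset_append]; rfl
      have hQcs : csw c Q = csw c Q1 ∪ csw c Q2 := by
        rw [csw, hQedges, List.toFinset_append]; rfl
      by_cases h1 : csw c P1 = csw c Q1
      · have h2 := ih w u P2 Q2 (by omega) (hP.dropUntil hwP) (hQ.dropUntil hwQ) hrP.2.1 hrQ.2.1
        exact hne (by rw [hPcs, hQcs, h1, h2])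
      · exact h1 (ih v w P1 Q1 (by omega) (hP.takeUntil hwP) (hQ.takeUntil hwQ) hrP.1 hrQ.1)
    · push_neg at hX
      have hdisj : ∀ x, x ∈ P.support → x ∈ Q.support → x = v ∨ x = u := by
        intro x hx1 hx2
        by_cases hxv : x = v
        · exact Or.inl hxv
        · exact Or.inr (hX x hx1 hx2 hxv)
      exact two_paths_contra hnc hvu hP hQ hrP hrQ hdisj hne

end

section
variable (hnc : ∀ (v : V) (w : G.Walk v v), w.IsCycle → 2 * ((w.edges.map c).toFinset.card) ≤ w.length)
include hnc

lemma extend_path {v u x : V} (P : G.Walk v u) (hP : P.IsPath) (hr : (P.edges.map c).Nodup)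
    (hadj : G.Adj u x) (hcnew : c s(u, x) ∉ csw c P) :
    ∃ P' : G.Walk v x, P'.IsPath ∧ (P'.edges.map c).Nodup ∧
      csw c P' = insert (c s(u, x)) (csw c P) ∧ P'.support = P.support ++ [x] := by
  have hx : x ∉ P.support := by
    intro hx
    set R : G.Walk x u := P.dropUntil x hx with hRdef
    have hRpath : R.IsPath := hP.dropUntil hx
    have hRr : (R.edges.map c).Nodup := by
      have hPedges : P.edges.map c =
          (P.takeUntil x hx).edges.map c ++ R.edges.map c := by
        conv_lhs => rw [← P.take_spec hx]
        rw [Walk.edges_append, List.map_append]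
      rw [hPedges, List.nodup_append] at hr
      exact hr.2.1
    have hcnewR : c s(u, x) ∉ R.edges.map c := by
      intro hmem
      apply hcnew
      rw [csw, List.mem_toFinset]
      obtain ⟨e, he, hce⟩ := List.mem_map.1 hmem
      exact List.mem_map.2 ⟨e, P.edges_dropUntil_subset hx he, hce⟩
    set W : G.Walk x x := R.append (Walk.cons hadj Walk.nil) with hWdef
    have hWedges : W.edges.map c = R.edges.map c ++ [c s(u, x)] := by
      rw [hWdef, Walk.edges_append, List.map_append]
      rfl
    have hWr : (W.edges.map c).Nodup := by
      rw [hWedges, List.nodup_append]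
      refine ⟨hRr, by simp, ?_⟩
      intro y hy y' hy' hyy'; subst hyy'
      simp only [List.mem_singleton] at hy'
      subst hy'
      exact hcnewR hy
    have hWcycle : W.IsCycle := by
      refine ⟨⟨⟨hWr.of_map⟩, ?_⟩, ?_⟩
      · intro h
        have := congrArg Walk.length h
        simp [hWdef, Walk.length_append] at this
      · rw [hWdef, Walk.tail_support_append]
        have hsup : (Walk.cons hadj (Walk.nil : G.Walk x x)).support.tail = [x] := by simp
        rw [hsup, List.nodup_append]
        refine ⟨hRpath.support_nodup.tail, by simp, ?_⟩
        intro y hy y' hy' hyy'; subst hyy'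
        simp only [List.mem_singleton] at hy'
        subst hy'
        have := hRpath.support_nodup
        rw [R.support_eq_cons] at this
        exact (List.nodup_cons.1 this).1 hy
    exact no_rainbow_cycle hnc W hWcycle hWr
  refine ⟨P.concat hadj, ?_, ?_, ?_, ?_⟩
  · apply Walk.IsPath.mk'
    rw [Walk.support_concat, List.nodup_append]
    refine ⟨hP.support_nodup, by simp, ?_⟩
    intro y hy y' hy' hyy'; subst hyy'
    simp only [List.mem_singleton] at hy'
    subst hy'
    exact hx hy
  · rw [Walk.edges_concat, List.concat_eq_append, List.map_append, List.nodup_append]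
    refine ⟨hr, by simp, ?_⟩
    intro y hy y' hy' hyy'; subst hyy'
    simp only [List.map_cons, List.map_nil, List.mem_singleton] at hy'
    subst hy'
    exact hcnew (by rw [csw, List.mem_toFinset]; exact hy)
  · rw [csw, Walk.edges_concat, List.concat_eq_append, List.map_append, List.toFinset_append]
    simp only [List.map_cons, List.map_nil, List.toFinset_cons, List.toFinset_nil]
    rw [csw]
    ext y
    simp [or_comm]
  · rw [Walk.support_concat]

end

lemma prune_min_degree [Fintype V] [DecidableRel G.Adj] (k : ℕ) :
    ∀ A : Finset V, 2 * (k - 1) * A.card < ∑ v ∈ A, ((G.neighborFinset v) ∩ A).card →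
    ∃ B : Finset V, B ⊆ A ∧ B.Nonempty ∧ ∀ v ∈ B, k ≤ ((G.neighborFinset v) ∩ B).card := by
  intro A
  induction A using Finset.strongInduction with
  | _ A ih =>
    intro hA
    have hAne : A.Nonempty := by
      rcases A.eq_empty_or_nonempty with h | h
      · subst h; simp at hA
      · exact h
    by_cases hall : ∀ v ∈ A, k ≤ ((G.neighborFinset v) ∩ A).card
    · exact ⟨A, Finset.Subset.refl A, hAne, hall⟩
    · push_neg at hall
      obtain ⟨v₀, hv₀A, hv₀⟩ := hall
      set A' := A.erase v₀ with hA'def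
      have hsub : A' ⊂ A := Finset.erase_ssubset hv₀A
      have e1 : ((G.neighborFinset v₀) ∩ A).card + ∑ v ∈ A', ((G.neighborFinset v) ∩ A).card
          = ∑ v ∈ A, ((G.neighborFinset v) ∩ A).card := by
        rw [hA'def]
        exact Finset.add_sum_erase A (fun v => ((G.neighborFinset v) ∩ A).card) hv₀A
      have h2 : ∀ v ∈ A', ((G.neighborFinset v) ∩ A).card ≤
          ((G.neighborFinset v) ∩ A').card + (if v₀ ∈ G.neighborFinset v then 1 else 0) := by
        intro v hv
        by_cases hvv : v₀ ∈ G.neighborFinset v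
        · rw [if_pos hvv]
          have hsub2 : (G.neighborFinset v) ∩ A ⊆ insert v₀ ((G.neighborFinset v) ∩ A') := by
            intro y hy
            rw [Finset.mem_inter] at hy
            rcases Finset.mem_insert.1 ((Finset.insert_erase hv₀A) ▸ hy.2 :
                y ∈ insert v₀ A') with h | h
            · exact Finset.mem_insert.2 (Or.inl h)
            · exact Finset.mem_insert.2 (Or.inr (Finset.mem_inter.2 ⟨hy.1, h⟩))
          calc ((G.neighborFinset v) ∩ A).card
              ≤ (insert v₀ ((G.neighborFinset v) ∩ A')).card := Finset.card_le_card hsub2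
            _ ≤ ((G.neighborFinset v) ∩ A').card + 1 := Finset.card_insert_le _ _
        · rw [if_neg hvv]
          apply Nat.le_add_right_of_le
          apply Finset.card_le_card
          intro y hy
          rw [Finset.mem_inter] at hy
          refine Finset.mem_inter.2 ⟨hy.1, Finset.mem_erase.2 ⟨?_, hy.2⟩⟩
          intro hye
          exact hvv (hye ▸ hy.1)
      have e2 : ∑ v ∈ A', ((G.neighborFinset v) ∩ A).card ≤
          (∑ v ∈ A', ((G.neighborFinset v) ∩ A').card) + ((G.neighborFinset v₀) ∩ A').card := by
        calc ∑ v ∈ A', ((G.neighborFinset v) ∩ A).card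
            ≤ ∑ v ∈ A', (((G.neighborFinset v) ∩ A').card +
              (if v₀ ∈ G.neighborFinset v then 1 else 0)) := Finset.sum_le_sum h2
          _ = (∑ v ∈ A', ((G.neighborFinset v) ∩ A').card) +
              ∑ v ∈ A', (if v₀ ∈ G.neighborFinset v then 1 else 0) := Finset.sum_add_distrib
          _ ≤ (∑ v ∈ A', ((G.neighborFinset v) ∩ A').card) +
              ((G.neighborFinset v₀) ∩ A').card := by
              apply Nat.add_le_add_left
              rw [← Finset.card_filter]
              apply Finset.card_le_card
              intro y hy
              rw [Finset.mem_filter] at hy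
              refine Finset.mem_inter.2 ⟨?_, hy.1⟩
              rw [SimpleGraph.mem_neighborFinset] at hy ⊢
              exact hy.2.symm
      have e3 : ((G.neighborFinset v₀) ∩ A').card ≤ ((G.neighborFinset v₀) ∩ A).card :=
        Finset.card_le_card (Finset.inter_subset_inter_left (Finset.erase_subset _ _))
      have e5 : A'.card = A.card - 1 := Finset.card_erase_of_mem hv₀A
      have e6 : 1 ≤ A.card := Finset.card_pos.2 hAne
      have e7 : A.card = A'.card + 1 := by omega
      have hm : 2 * (k - 1) * A.card = 2 * (k - 1) * A'.card + 2 * (k - 1) := by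
        rw [e7, Nat.mul_add, Nat.mul_one]
      have hcA : ((G.neighborFinset v₀) ∩ A).card + ((G.neighborFinset v₀) ∩ A).card
          ≤ 2 * (k - 1) := by omega
      have hA' : 2 * (k - 1) * A'.card < ∑ v ∈ A', ((G.neighborFinset v) ∩ A').card := by omega
      obtain ⟨B, hBsub, hBne, hBdeg⟩ := ih A' hsub hA'
      exact ⟨B, hBsub.trans (Finset.erase_subset _ _), hBne, hBdeg⟩

lemma count_colorsets [Fintype V] [DecidableRel G.Adj]
    (hproper : ∀ a b b' : V, G.Adj a b → G.Adj a b' → b ≠ b' → c s(a, b) ≠ c s(a, b'))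
    (hnc : ∀ (v : V) (w : G.Walk v v), w.IsCycle → 2 * ((w.edges.map c).toFinset.card) ≤ w.length)
    (k : ℕ) (B : Finset V) (hBne : B.Nonempty)
    (hBdeg : ∀ v ∈ B, k ≤ ((G.neighborFinset v) ∩ B).card) :
    2 ^ k ≤ Fintype.card V := by
  classical
  obtain ⟨v₀, hv₀B⟩ := hBne
  set Pred : V → Prop := fun u => ∃ P : G.Walk v₀ u, P.IsPath ∧ (P.edges.map c).Nodup ∧
    ∀ y ∈ P.support, y ∈ B with hPred
  set U : Finset V := Finset.univ.filter Pred with hU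
  set f : V → Finset ℕ := fun u => if h : Pred u then csw c h.choose else ∅ with hf
  have hreal : ∀ (u : V) (P : G.Walk v₀ u), P.IsPath → (P.edges.map c).Nodup →
      (∀ y ∈ P.support, y ∈ B) → f u = csw c P := by
    intro u P hP hr hsupp
    have hu : Pred u := ⟨P, hP, hr, hsupp⟩
    rw [hf]
    simp only [dif_pos hu]
    obtain ⟨h1, h2, h3⟩ := hu.choose_spec
    exact key_same_cs hnc (hu.choose.length + P.length) v₀ u hu.choose P le_rfl h1 hP h2 hr
  set F : Finset (Finset ℕ) := U.image f with hF
  set Fl : ℕ → Finset (Finset ℕ) := fun i => F.filter (fun S => S.card = i) with hFl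
  -- base layer
  have hbase : ∅ ∈ Fl 0 := by
    have hPredv₀ : Pred v₀ := by
      refine ⟨Walk.nil, Walk.IsPath.nil, by simp, ?_⟩
      intro y hy
      simp only [Walk.support_nil, List.mem_singleton] at hy
      subst hy; exact hv₀B
    have hfv₀ : f v₀ = ∅ := by
      have := hreal v₀ Walk.nil Walk.IsPath.nil (by simp) (by
        intro y hy
        simp only [Walk.support_nil, List.mem_singleton] at hy
        subst hy; exact hv₀B)
      simpa [csw] using this
    rw [hFl]
    refine Finset.mem_filter.2 ⟨?_, by simp⟩
    rw [hF]
    exact Finset.mem_image.2 ⟨v₀, Finset.mem_filter.2 ⟨Finset.mem_univ _, hPredv₀⟩, hfv₀⟩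
  -- expansion step
  have hstep : ∀ i, i < k → ∀ S ∈ Fl i,
      (k - i) ≤ (((Fl (i+1)).bipartiteAbove (· ⊆ ·) S)).card := by
    intro i hik S hS
    rw [hFl] at hS
    obtain ⟨hSF, hScard⟩ := Finset.mem_filter.1 hS
    rw [hF] at hSF
    obtain ⟨u, huU, hfu⟩ := Finset.mem_image.1 hSF
    have hu : Pred u := (Finset.mem_filter.1 huU).2
    obtain ⟨hP, hr, hsupp⟩ := hu.choose_spec
    set P := hu.choose with hPdef
    have hfP : f u = csw c P := by rw [hf]; simp only [dif_pos hu]; rfl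
    have hScs : S = csw c P := by rw [← hfu, hfP]
    have hlen : P.length = i := by rw [← csw_card hr, ← hScs, hScard]
    have huB : u ∈ B := hsupp u P.end_mem_support
    set N : Finset V := (G.neighborFinset u) ∩ B with hN
    have hNcard : k ≤ N.card := hBdeg u huB
    set colors : Finset ℕ := N.image (fun x => c s(u, x)) with hcolors
    have hcolcard : colors.card = N.card := by
      rw [hcolors]
      apply Finset.card_image_of_injOn
      intro x hx y hy hxy
      by_contra hne
      exact hproper u x y
        ((SimpleGraph.mem_neighborFinset _ _ _).1 (Finset.mem_inter.1 hx).1)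
        ((SimpleGraph.mem_neighborFinset _ _ _).1 (Finset.mem_inter.1 hy).1) hne hxy
    set good : Finset ℕ := colors \ S with hgood
    have hgoodcard : k - i ≤ good.card := by
      have h1 := Finset.le_card_sdiff S colors
      rw [← hgood] at h1
      omega
    have hmap : ∀ col ∈ good, insert col S ∈ (Fl (i+1)).bipartiteAbove (· ⊆ ·) S := by
      intro col hcol
      rw [hgood, Finset.mem_sdiff] at hcol
      obtain ⟨hcolc, hcolS⟩ := hcol
      rw [hcolors] at hcolc
      obtain ⟨x, hxN, hcx⟩ := Finset.mem_image.1 hcolc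
      rw [hN, Finset.mem_inter] at hxN
      have hadj : G.Adj u x := (SimpleGraph.mem_neighborFinset _ _ _).1 hxN.1
      have hnew : c s(u, x) ∉ csw c P := by rw [← hScs, hcx]; exact hcolS
      obtain ⟨P', hP', hr', hcs', hsupp'⟩ := extend_path hnc P hP hr hadj hnew
      have hsupp'' : ∀ y ∈ P'.support, y ∈ B := by
        intro y hy
        rw [hsupp'] at hy
        rcases List.mem_append.1 hy with h | h
        · exact hsupp y h
        · simp only [List.mem_singleton] at h
          subst h; exact hxN.2
      have hfx : f x = insert col S := by
        rw [hreal x P' hP' hr' hsupp'', hcs', hcx, hScs]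
      refine (Finset.mem_bipartiteAbove _).2 ⟨?_, Finset.subset_insert _ _⟩
      rw [hFl]
      refine Finset.mem_filter.2 ⟨?_, ?_⟩
      · rw [hF]
        exact Finset.mem_image.2 ⟨x, Finset.mem_filter.2 ⟨Finset.mem_univ _,
          ⟨P', hP', hr', hsupp''⟩⟩, hfx⟩
      · rw [Finset.card_insert_of_notMem hcolS, hScard]
    calc k - i ≤ good.card := hgoodcard
      _ ≤ (((Fl (i+1)).bipartiteAbove (· ⊆ ·) S)).card := by
          apply Finset.card_le_card_of_injOn (fun col => insert col S) hmap
          intro a ha b hb hab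
          rw [hgood, Finset.coe_sdiff] at ha hb
          have haS : a ∉ S := ha.2
          have hbS : b ∉ S := hb.2
          have hab' : insert a S = insert b S := hab
          have : a ∈ insert b S := hab' ▸ Finset.mem_insert_self a S
          rcases Finset.mem_insert.1 this with h | h
          · exact h
          · exact absurd h haS
  -- double counting between layers
  have hcount : ∀ i, i < k → (Fl i).card * (k - i) ≤ (Fl (i+1)).card * (i + 1) := by
    intro i hik
    apply Finset.card_mul_le_card_mul (· ⊆ ·) (hstep i hik)
    intro T hT
    rw [hFl] at hT
    obtain ⟨hTF, hTcard⟩ := Finset.mem_filter.1 hT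
    calc ((Fl i).bipartiteBelow (· ⊆ ·) T).card
        ≤ (T.powersetCard i).card := by
          apply Finset.card_le_card
          intro S hS
          rw [Finset.mem_bipartiteBelow _] at hS
          obtain ⟨hS1, hS2⟩ := hS
          rw [hFl] at hS1
          exact Finset.mem_powersetCard.2 ⟨hS2, (Finset.mem_filter.1 hS1).2⟩
      _ = i + 1 := by rw [Finset.card_powersetCard, hTcard, Nat.choose_succ_self_right]
  -- choose k i ≤ |Fl i|
  have hchoose : ∀ i, i ≤ k → k.choose i ≤ (Fl i).card := by
    intro i
    induction i with
    | zero =>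
      intro _
      simpa using Finset.card_pos.2 ⟨∅, hbase⟩
    | succ i ih =>
      intro hik
      have hik' : i < k := by omega
      have h1 := hcount i hik'
      have h2 := ih (le_of_lt hik')
      have h3 : k.choose (i+1) * (i+1) = k.choose i * (k - i) := Nat.choose_succ_right_eq k i
      have h4 : k.choose (i+1) * (i+1) ≤ (Fl (i+1)).card * (i+1) := by
        rw [h3]
        calc k.choose i * (k - i) ≤ (Fl i).card * (k - i) := Nat.mul_le_mul_right _ h2
          _ ≤ (Fl (i+1)).card * (i+1) := h1
      exact Nat.le_of_mul_le_mul_right h4 (Nat.succ_pos i)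
  -- sum up
  have hdisj : ∀ x ∈ Finset.range (k+1), ∀ y ∈ Finset.range (k+1), x ≠ y →
      Disjoint (Fl x) (Fl y) := by
    intro x _ y _ hxy
    rw [Finset.disjoint_left]
    intro S hSx hSy
    rw [hFl] at hSx hSy
    exact hxy ((Finset.mem_filter.1 hSx).2 ▸ (Finset.mem_filter.1 hSy).2 ▸ rfl)
  have hsum : 2 ^ k ≤ F.card := by
    calc 2 ^ k = ∑ i ∈ Finset.range (k+1), k.choose i := (Nat.sum_range_choose k).symm
      _ ≤ ∑ i ∈ Finset.range (k+1), (Fl i).card := by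
          apply Finset.sum_le_sum
          intro i hi
          exact hchoose i (by simpa [Nat.lt_succ_iff] using hi)
      _ = ((Finset.range (k+1)).biUnion Fl).card := (Finset.card_biUnion hdisj).symm
      _ ≤ F.card := by
          apply Finset.card_le_card
          intro S hS
          obtain ⟨i, _, hSi⟩ := Finset.mem_biUnion.1 hS
          rw [hFl] at hSi
          exact (Finset.mem_filter.1 hSi).1
  calc 2 ^ k ≤ F.card := hsum
    _ ≤ U.card := Finset.card_image_le
    _ ≤ Fintype.card V := by
        rw [hU, ← Finset.card_univ]
        exact Finset.card_le_card (Finset.filter_subset _ _)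

/-- Every properly edge-colored graph on `n ≥ 1` vertices with at least
`n log₂ (n+3)` edges contains a cycle of some length `k` whose edges receive more than
`k/2` distinct colors. -/
theorem cycle_with_many_colors (n : ℕ) (hn : 1 ≤ n)
    (G : SimpleGraph (Fin n)) (c : Sym2 (Fin n) → ℕ)
    (hproper : ∀ a b b' : Fin n, G.Adj a b → G.Adj a b' → b ≠ b' → c s(a, b) ≠ c s(a, b'))
    (hedges : (n : ℝ) * Real.logb 2 ((n : ℝ) + 3) ≤ (G.edgeSet.ncard : ℝ)) :
    ∃ (v : Fin n) (w : G.Walk v v), w.IsCycle ∧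
      (w.length : ℝ) / 2 < ((w.edges.map c).toFinset.card : ℝ) := by
  classical
  by_contra hgc
  push_neg at hgc
  have hnc : ∀ (v : Fin n) (w : G.Walk v v), w.IsCycle →
      2 * ((w.edges.map c).toFinset.card) ≤ w.length := by
    intro v w hcyc
    have h1 := hgc v w hcyc
    have h2 : ((2 * ((w.edges.map c).toFinset.card) : ℕ) : ℝ) ≤ (w.length : ℝ) := by
      push_cast
      linarith
    exact_mod_cast h2
  set x : ℝ := Real.logb 2 ((n : ℝ) + 3) with hx
  have hn3 : (4 : ℝ) ≤ (n : ℝ) + 3 := by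
    have : (1 : ℝ) ≤ (n : ℝ) := by exact_mod_cast hn
    linarith
  have hxpos : 0 < x := by
    rw [hx]
    apply Real.logb_pos (by norm_num)
    linarith
  set k : ℕ := ⌈x⌉₊ with hk
  have hk1 : 1 ≤ k := Nat.one_le_iff_ne_zero.2 (by
    intro h0
    have := Nat.ceil_pos.2 hxpos
    omega)
  -- n + 3 ≤ 2 ^ k
  have hpow : n + 3 ≤ 2 ^ k := by
    have h1 : (2 : ℝ) ^ x = (n : ℝ) + 3 := Real.rpow_logb (by norm_num) (by norm_num) (by linarith)
    have h2 : x ≤ (k : ℝ) := Nat.le_ceil x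
    have h3 : (2 : ℝ) ^ x ≤ (2 : ℝ) ^ (k : ℝ) := (Real.rpow_le_rpow_left_iff (by norm_num)).2 h2
    have h4 : ((n : ℝ) + 3) ≤ ((2 ^ k : ℕ) : ℝ) := by
      rw [← h1]
      calc (2:ℝ) ^ x ≤ (2 : ℝ) ^ (k : ℝ) := h3
        _ = ((2 ^ k : ℕ) : ℝ) := by
            rw [Real.rpow_natCast]
            push_cast
            ring
    exact_mod_cast h4
  -- edge count
  have hE : G.edgeSet.ncard = G.edgeFinset.card := by
    rw [Set.ncard_eq_toFinset_card']
    congr 1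
  have hkn : (k - 1) * n < G.edgeFinset.card := by
    have hlt : (k : ℝ) - 1 < x := by
      have := Nat.ceil_lt_add_one (le_of_lt hxpos)
      rw [← hk] at this
      linarith
    have hnpos : (0 : ℝ) < (n : ℝ) := by exact_mod_cast hn
    have h5 : ((k : ℝ) - 1) * (n : ℝ) < x * (n : ℝ) := by
      apply mul_lt_mul_of_pos_right hlt hnpos
    have h6 : x * (n : ℝ) ≤ (G.edgeFinset.card : ℝ) := by
      rw [mul_comm]
      rw [hE] at hedges
      exact hedges
    have h7 : (((k - 1) * n : ℕ) : ℝ) < (G.edgeFinset.card : ℝ) := by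
      have hc : ((k - 1 : ℕ) : ℝ) = (k : ℝ) - 1 := by
        rw [Nat.cast_sub hk1]
        norm_num
      push_cast [hc]
      linarith
    exact_mod_cast h7
  -- prune to min degree k
  have hsum : 2 * (k - 1) * (Finset.univ : Finset (Fin n)).card <
      ∑ v ∈ (Finset.univ : Finset (Fin n)), ((G.neighborFinset v) ∩ Finset.univ).card := by
    have hdeg : ∑ v ∈ (Finset.univ : Finset (Fin n)), ((G.neighborFinset v) ∩ Finset.univ).card
        = 2 * G.edgeFinset.card := by
      simp only [Finset.inter_univ]
      exact G.sum_degrees_eq_twice_card_edges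
    rw [hdeg, Finset.card_univ, Fintype.card_fin]
    have he : 2 * (k - 1) * n = 2 * ((k - 1) * n) := by ring
    omega
  obtain ⟨B, hBsub, hBne, hBdeg⟩ := prune_min_degree k Finset.univ hsum
  have hfinal := count_colorsets hproper hnc k B hBne hBdeg
  rw [Fintype.card_fin] at hfinal
  omega
end

section
/- For every positive integer K there exists a constant C = C(K) > 0 such that the following holds: if Γ is an abelian group and A ⊆ Γ is a finite subset with |A| ≥ 2 and |A + A| ≤ K·|A|, then every dissociated subset of A has size at most C·log(|A|); that is, the additive dimension of A is at most C·log(|A|). -/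
open Pointwise

/-- A subset `S` of an additively written abelian group is dissociated if no nonempty
finite subset of `S` admits a `±1`-signed sum equal to `0`. -/
def IsDissociatedAdd {Γ : Type*} [AddCommGroup Γ] (S : Set Γ) : Prop :=
  ∀ T : Finset Γ, ↑T ⊆ S → T.Nonempty →
    ∀ ε : Γ → ℤ, (∀ g ∈ T, ε g = 1 ∨ ε g = -1) → ∑ g ∈ T, ε g • g ≠ 0

private lemma sum_mem_nsmul_aux {Γ : Type*} [AddCommGroup Γ] [DecidableEq Γ] (A : Finset Γ) :
    ∀ k : ℕ, 1 ≤ k → ∀ T : Finset Γ, T ⊆ A → T.card = k → (∑ g ∈ T, g) ∈ k • A := by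
  intro k hk
  induction k, hk using Nat.le_induction with
  | base =>
    intro T hTA hT
    obtain ⟨a, rfl⟩ := Finset.card_eq_one.mp hT
    simpa using hTA (Finset.mem_singleton_self a)
  | succ k hk ih =>
    intro T hTA hT
    have hTne : T.Nonempty := Finset.card_pos.mp (by omega)
    obtain ⟨a, ha⟩ := hTne
    have hsum : ∑ g ∈ T.erase a, g + a = ∑ g ∈ T, g := by
      simpa using Finset.sum_erase_add T id ha
    have hcard : (T.erase a).card = k := by
      rw [Finset.card_erase_of_mem ha, hT]; omega
    have hmem : (∑ g ∈ T.erase a, g) ∈ k • A :=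
      ih _ ((Finset.erase_subset a T).trans hTA) hcard
    have : (∑ g ∈ T.erase a, g) + a ∈ k • A + A :=
      Finset.add_mem_add hmem (hTA ha)
    rw [hsum] at this
    rwa [succ_nsmul]

private lemma diss_sum_inj {Γ : Type*} [AddCommGroup Γ] [DecidableEq Γ] {S : Finset Γ}
    (hS : IsDissociatedAdd (S : Set Γ)) {T₁ T₂ : Finset Γ} (h1 : T₁ ⊆ S) (h2 : T₂ ⊆ S)
    (hsum : ∑ g ∈ T₁, g = ∑ g ∈ T₂, g) : T₁ = T₂ := by
  by_contra hne
  have hdisj : Disjoint (T₁ \ T₂) (T₂ \ T₁) := disjoint_sdiff_sdiff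
  set T : Finset Γ := (T₁ \ T₂) ∪ (T₂ \ T₁) with hT
  have hTne : T.Nonempty := by
    rw [Finset.nonempty_iff_ne_empty]
    intro h
    apply hne
    have h1' : T₁ \ T₂ = ∅ := by
      have := Finset.union_eq_empty.mp h
      exact this.1
    have h2' : T₂ \ T₁ = ∅ := (Finset.union_eq_empty.mp h).2
    exact Finset.Subset.antisymm (Finset.sdiff_eq_empty_iff_subset.mp h1')
      (Finset.sdiff_eq_empty_iff_subset.mp h2')
  have hTS : ↑T ⊆ (S : Set Γ) := by
    intro x hx
    simp only [hT, Finset.coe_union, Set.mem_union, Finset.mem_coe, Finset.mem_sdiff] at hx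
    rcases hx with ⟨hx, _⟩ | ⟨hx, _⟩
    · exact h1 hx
    · exact h2 hx
  set ε : Γ → ℤ := fun g => if g ∈ T₁ then 1 else -1 with hε
  have hεval : ∀ g ∈ T, ε g = 1 ∨ ε g = -1 := by
    intro g _
    by_cases h : g ∈ T₁ <;> simp [hε, h]
  apply hS T hTS hTne ε hεval
  have e1 : ∑ g ∈ T₁ \ T₂, ε g • g = ∑ g ∈ T₁ \ T₂, g := by
    apply Finset.sum_congr rfl
    intro g hg
    have : g ∈ T₁ := (Finset.mem_sdiff.mp hg).1
    simp [hε, this]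
  have e2 : ∑ g ∈ T₂ \ T₁, ε g • g = -∑ g ∈ T₂ \ T₁, g := by
    rw [← Finset.sum_neg_distrib]
    apply Finset.sum_congr rfl
    intro g hg
    have : g ∉ T₁ := (Finset.mem_sdiff.mp hg).2
    simp [hε, this]
  have key : ∑ g ∈ T₁ \ T₂, g = ∑ g ∈ T₂ \ T₁, g := by
    have i1 : ∑ g ∈ T₁ ∩ T₂, g + ∑ g ∈ T₁ \ T₂, g = ∑ g ∈ T₁, g :=
      Finset.sum_inter_add_sum_sdiff T₁ T₂ id
    have i2 : ∑ g ∈ T₂ ∩ T₁, g + ∑ g ∈ T₂ \ T₁, g = ∑ g ∈ T₂, g :=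
      Finset.sum_inter_add_sum_sdiff T₂ T₁ id
    rw [Finset.inter_comm] at i2
    have : ∑ g ∈ T₁ ∩ T₂, g + ∑ g ∈ T₁ \ T₂, g = ∑ g ∈ T₁ ∩ T₂, g + ∑ g ∈ T₂ \ T₁, g := by
      rw [i1, i2, hsum]
    exact add_left_cancel this
  rw [Finset.sum_union hdisj, e1, e2, key]
  simp

/-- For every positive integer `K` there is a constant `C > 0` such that for every
abelian group `Γ` and every finite `A ⊆ Γ` with `|A| ≥ 2` and `|A + A| ≤ K |A|`, every
dissociated subset of `A` has size at most `C log |A|`. -/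
theorem additive_dimension_small_doubling_abelian (K : ℕ) (hK : 0 < K) :
    ∃ C > (0 : ℝ), ∀ (Γ : Type*) [AddCommGroup Γ] [DecidableEq Γ] (A : Finset Γ),
      2 ≤ A.card → (A + A).card ≤ K * A.card →
      ∀ S : Finset Γ, ↑S ⊆ (A : Set Γ) → IsDissociatedAdd (S : Set Γ) →
        (S.card : ℝ) ≤ C * Real.log A.card := by
  have hl2 : (0 : ℝ) < Real.log 2 := Real.log_pos (by norm_num)
  refine ⟨6 * K / Real.log 2, by positivity, ?_⟩
  intro Γ _ _ A hA2 hAA S hSA hSdiss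
  set n := S.card with hn
  have hSA' : S ⊆ A := fun x hx => hSA hx
  -- basic log facts
  have hApos : (0 : ℝ) < A.card := by positivity
  have hlogA : Real.log 2 ≤ Real.log A.card := by
    apply Real.log_le_log (by norm_num)
    exact_mod_cast hA2
  have hlogApos : (0 : ℝ) < Real.log A.card := lt_of_lt_of_le hl2 hlogA
  have h3K : 0 < 3 * K := by omega
  obtain ⟨k, hkdef⟩ : ∃ k, n / (3 * K) = k := ⟨_, rfl⟩
  have hmod := Nat.div_add_mod n (3 * K)
  have hmlt := Nat.mod_lt n h3K
  rw [hkdef] at hmod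
  -- n < 3K(k+1)
  have hnlt : n < 3 * K * k + 3 * K := by omega
  by_cases hk0 : k = 0
  · -- trivial case: n < 3K
    have : (n : ℝ) ≤ 3 * K := by
      rw [hk0] at hnlt
      have : n < 3 * K := by omega
      exact_mod_cast this.le
    calc (n : ℝ) ≤ 3 * K := this
      _ = (6 * K / Real.log 2) * (Real.log 2 / 2) := by field_simp; ring
      _ ≤ (6 * K / Real.log 2) * Real.log A.card := by
          apply mul_le_mul_of_nonneg_left _ (by positivity)
          nlinarith
  · have hk1 : 1 ≤ k := Nat.one_le_iff_ne_zero.mpr hk0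
    have hkn : 3 * K * k ≤ n := by omega
    have hkK : k ≤ K * k := Nat.le_mul_of_pos_left k hK
    have h3Kk : 3 * K * k = 3 * (K * k) := by ring
    have hkln : k ≤ n := by omega
    -- Step A: (2K)^k ≤ choose n k  (in ℝ)
    have hnat : (2 * K) ^ k * k.factorial ≤ (n + 1 - k) ^ k := by
      have hfac : k.factorial ≤ k ^ k := Nat.factorial_le_pow k
      have h2Kk : 2 * K * k = 2 * (K * k) := by ring
      have hbase : 2 * K * k ≤ n + 1 - k := by omega
      calc (2 * K) ^ k * k.factorial ≤ (2 * K) ^ k * k ^ k :=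
            Nat.mul_le_mul_left _ hfac
        _ = (2 * K * k) ^ k := by ring
        _ ≤ (n + 1 - k) ^ k := Nat.pow_le_pow_left hbase k
    have hstepA : ((2 * K : ℕ) : ℝ) ^ k ≤ (n.choose k : ℝ) := by
      have h1 : ((2 * K : ℕ) : ℝ) ^ k ≤ ((n + 1 - k : ℕ) ^ k : ℝ) / (k.factorial : ℝ) := by
        rw [le_div_iff₀ (by positivity)]
        exact_mod_cast hnat
      exact h1.trans (Nat.pow_le_choose k n)
    -- Step B: choose n k ≤ #(k • A)
    have hstepB : n.choose k ≤ (k • A).card := by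
      rw [← Finset.card_powersetCard k S]
      apply Finset.card_le_card_of_injOn (fun T => ∑ g ∈ T, g)
      · intro T hT
        rw [Finset.mem_coe, Finset.mem_powersetCard] at hT
        exact sum_mem_nsmul_aux A k hk1 T (hT.1.trans hSA') hT.2
      · intro T₁ h₁ T₂ h₂ hsum
        rw [Finset.mem_coe, Finset.mem_powersetCard] at h₁ h₂
        exact diss_sum_inj hSdiss h₁.1 h₂.1 hsum
    -- Step C: #(k • A) ≤ K^k * #A (Plünnecke–Ruzsa)
    have hAne : A.Nonempty := Finset.card_pos.mp (by omega)
    have hstepC : ((k • A).card : ℝ) ≤ (K : ℝ) ^ k * A.card := by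
      have hq : ((k • A).card : ℚ≥0) ≤ ((A + A).card / A.card : ℚ≥0) ^ k * A.card :=
        Finset.pluennecke_ruzsa_inequality_nsmul_add hAne A k
      have hcard0 : (0 : ℚ≥0) < (A.card : ℚ≥0) := by
        have : 0 < A.card := by omega
        exact_mod_cast this
      have hdiv : ((A + A).card / A.card : ℚ≥0) ≤ (K : ℚ≥0) := by
        rw [div_le_iff₀ hcard0]
        exact_mod_cast hAA
      have hq2 : ((k • A).card : ℚ≥0) ≤ (K : ℚ≥0) ^ k * A.card :=
        hq.trans (mul_le_mul_left (pow_le_pow_left₀ zero_le hdiv k) _)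
      exact_mod_cast hq2
    -- Combine: 2^k ≤ #A
    have hcomb : (2 : ℝ) ^ k ≤ (A.card : ℝ) := by
      have hKpos : (0 : ℝ) < (K : ℝ) ^ k := by positivity
      have : ((2 * K : ℕ) : ℝ) ^ k ≤ (K : ℝ) ^ k * A.card :=
        hstepA.trans ((Nat.cast_le.mpr hstepB).trans hstepC)
      have h2K : ((2 * K : ℕ) : ℝ) ^ k = 2 ^ k * (K : ℝ) ^ k := by
        push_cast
        rw [mul_pow]
      rw [h2K] at this
      calc (2 : ℝ) ^ k = 2 ^ k * (K : ℝ) ^ k / (K : ℝ) ^ k := by field_simp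
        _ ≤ (K : ℝ) ^ k * A.card / (K : ℝ) ^ k := by gcongr
        _ = A.card := by field_simp
    -- k log 2 ≤ log #A
    have hklog : (k : ℝ) * Real.log 2 ≤ Real.log A.card := by
      have := Real.log_le_log (by positivity) hcomb
      rwa [Real.log_pow] at this
    have hkle : (k : ℝ) ≤ Real.log A.card / Real.log 2 := by
      rw [le_div_iff₀ hl2]
      linarith
    -- final arithmetic
    have hnR : (n : ℝ) ≤ 3 * K * k + 3 * K := by exact_mod_cast hnlt.le
    have h3Kle : (3 * K : ℝ) ≤ 3 * K * (Real.log A.card / Real.log 2) := by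
      have : (1 : ℝ) ≤ Real.log A.card / Real.log 2 := by
        rw [le_div_iff₀ hl2]; linarith
      nlinarith
    calc (n : ℝ) ≤ 3 * K * k + 3 * K := hnR
      _ ≤ 3 * K * (Real.log A.card / Real.log 2) + 3 * K * (Real.log A.card / Real.log 2) := by
          have h1 : 3 * (K : ℝ) * k ≤ 3 * K * (Real.log A.card / Real.log 2) := by
            apply mul_le_mul_of_nonneg_left hkle (by positivity)
          linarith
      _ = (6 * K / Real.log 2) * Real.log A.card := by ring
end

section
/- Let k ≥ 2 and consider the complete graph on vertex set 𝔽₂^k in which each edge {x,y} is colored by x + y ∈ 𝔽₂^k \ {0}. Then this properly edge-colored complete graph contains no rainbow Hamilton path, i.e., no path visiting all 2^k vertices whose 2^k − 1 edges receive pairwise distinct colors. -/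
/-- The "color" of an edge `{x, y}` in the canonical coloring of the complete graph on an
abelian group: the sum `x + y` of its endpoints. -/
def edgeSum {V : Type*} [AddCommMonoid V] : Sym2 V → V :=
  Sym2.lift ⟨fun x y => x + y, fun x y => add_comm x y⟩

lemma z2_add_self : ∀ x : ZMod 2, x + x = 0 := by decide

lemma F2_add_self (k : ℕ) (x : Fin k → ZMod 2) : x + x = 0 := by
  funext i
  exact z2_add_self (x i)

lemma walk_edgeSum (k : ℕ) {u v : Fin k → ZMod 2}
    (w : (⊤ : SimpleGraph (Fin k → ZMod 2)).Walk u v) :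
    (w.edges.map edgeSum).sum = u + v := by
  induction w with
  | nil => simpa using (F2_add_self k _).symm
  | @cons a b c h p ih =>
      simp only [SimpleGraph.Walk.edges_cons, List.map_cons, List.sum_cons, ih]
      show edgeSum s(a, b) + (b + c) = a + c
      have h1 : edgeSum s(a, b) = a + b := rfl
      have hbb := F2_add_self k b
      rw [h1]
      calc a + b + (b + c) = a + (b + b) + c := by abel
        _ = a + c := by rw [hbb, add_zero]

lemma sum_univ_zero (k : ℕ) (hk : 2 ≤ k) :
    (∑ x : Fin k → ZMod 2, x) = 0 := by
  funext i
  rw [Finset.sum_apply]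
  have heq := Fintype.sum_equiv (Equiv.piSplitAt i (fun _ => ZMod 2))
      (fun x => x i) (fun p => p.1) (fun x => by simp [Equiv.piSplitAt])
  rw [heq, Fintype.sum_prod_type]
  simp only [Finset.sum_const, Finset.card_univ]
  have hcard : Fintype.card ({ j // j ≠ i } → ZMod 2) = 2 ^ (k - 1) := by
    rw [Fintype.card_fun, ZMod.card]
    have : Fintype.card { j : Fin k // j ≠ i } = k - 1 := by
      rw [Fintype.card_subtype_compl]
      simp
    rw [this]
  rw [hcard]
  have hsmul : ∀ x : ZMod 2, (2 ^ (k - 1)) • x = 0 := by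
    intro x
    have hm : 2 ^ (k - 1) = 2 * 2 ^ (k - 2) := by
      rw [← pow_succ']
      congr 1
      omega
    rw [hm, mul_nsmul, two_nsmul, z2_add_self, smul_zero]
  simp only [hsmul, Finset.sum_const, smul_zero]
  rfl

/-- Maamoun–Meyniel: For `k ≥ 2`, the complete graph on `𝔽₂^k` with each edge
`{x, y}` colored by `x + y` contains no rainbow Hamilton path: there is no path visiting all
`2^k` vertices whose edges receive pairwise distinct colors. -/
theorem no_rainbow_hamilton_path (k : ℕ) (hk : 2 ≤ k) :
    ¬ ∃ (u v : Fin k → ZMod 2)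
        (w : (⊤ : SimpleGraph (Fin k → ZMod 2)).Walk u v),
        w.IsPath ∧ (∀ x : Fin k → ZMod 2, x ∈ w.support) ∧
        (w.edges.map edgeSum).Nodup := by
  rintro ⟨u, v, w, hpath, hall, hnodup⟩
  classical
  have hcardV : Fintype.card (Fin k → ZMod 2) = 2 ^ k := by
    rw [Fintype.card_fun, ZMod.card, Fintype.card_fin]
  have hsupnodup : w.support.Nodup := hpath.support_nodup
  have hsupfin : w.support.toFinset = Finset.univ :=
    Finset.eq_univ_iff_forall.2 (fun x => List.mem_toFinset.2 (hall x))
  have hsuplen : w.support.length = 2 ^ k := by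
    rw [← List.toFinset_card_of_nodup hsupnodup, hsupfin, Finset.card_univ, hcardV]
  have hlen : w.length = 2 ^ k - 1 := by
    have := w.length_support
    omega
  set L := w.edges.map edgeSum with hL
  have hLlen : L.length = 2 ^ k - 1 := by
    rw [hL, List.length_map, SimpleGraph.Walk.length_edges, hlen]
  have hLne : ∀ c ∈ L, c ≠ 0 := by
    intro c hc
    rw [hL, List.mem_map] at hc
    obtain ⟨e, he, rfl⟩ := hc
    have hedge := w.edges_subset_edgeSet he
    induction e with
    | h x y =>
      have hxy : x ≠ y := ((SimpleGraph.mem_edgeSet _).mp hedge).ne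
      intro h0
      apply hxy
      have h1 : edgeSum s(x, y) = x + y := rfl
      rw [h1] at h0
      have hyy := F2_add_self k y
      calc x = x + (y + y) := by rw [hyy, add_zero]
        _ = (x + y) + y := by abel
        _ = y := by rw [h0, zero_add]
  have hsub : L.toFinset ⊆ Finset.univ.erase (0 : Fin k → ZMod 2) := by
    intro c hc
    exact Finset.mem_erase.2 ⟨hLne c (List.mem_toFinset.1 hc), Finset.mem_univ c⟩
  have hLtf : L.toFinset = Finset.univ.erase (0 : Fin k → ZMod 2) := by
    apply Finset.eq_of_subset_of_card_le hsub
    rw [Finset.card_erase_of_mem (Finset.mem_univ _), Finset.card_univ, hcardV,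
      List.toFinset_card_of_nodup hnodup, hLlen]
  have hsum0 : L.sum = 0 := by
    have h1 : L.toFinset.sum id = (L.map id).sum := List.sum_toFinset id hnodup
    rw [List.map_id] at h1
    rw [← h1, hLtf]
    have h2 : (Finset.univ.erase (0 : Fin k → ZMod 2)).sum id = Finset.univ.sum id :=
      Finset.sum_erase _ rfl
    rw [h2]
    simpa using sum_univ_zero k hk
  have hsum : L.sum = u + v := walk_edgeSum k w
  have huv : u = v := by
    have h0 : u + v = 0 := by rw [← hsum, hsum0]
    have hvv := F2_add_self k v
    calc u = u + (v + v) := by rw [hvv, add_zero]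
      _ = (u + v) + v := by abel
      _ = v := by rw [h0, zero_add]
  subst huv
  have hnil := SimpleGraph.Walk.isPath_iff_eq_nil.1 hpath
  have hlen0 : w.length = 0 := by rw [hnil]; rfl
  have h4 : 2 ^ k ≥ 4 := by
    calc 2 ^ k ≥ 2 ^ 2 := Nat.pow_le_pow_right (by norm_num) hk
      _ = 4 := by norm_num
  omega
end
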